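/- Let v⋆ ∈ [0,r) with F(v⋆) < 1 and v⋆ ≥ 0, let m ≥ 1 be an integer, let v̂ ∈ (v⋆, 1), and let c ≥ 0. Define β(v) := v + [c + ∫_v^{v̂} (1 − G(x;v⋆))^{m−1} dx] / (1 − G(v;v⋆))^{m−1} for v ∈ [v⋆, v̂]. Then the maps v ↦ (1 − G(v;v⋆))^{m−1} β(v) and v ↦ (1 − G(v;v⋆))^m β(v) are nonincreasing on [v⋆, v̂]. -/
import Mathlib

open MeasureTheory Set

/-- Truncated conditional CDF `G(x; v⋆) = (F x − F v⋆)/(1 − F v⋆)`. -/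
noncomputable def G (F : ℝ → ℝ) (vs x : ℝ) : ℝ := (F x - F vs) / (1 - F vs)

lemma aux_fact4 (g : ℝ → ℝ) (hgcont : Continuous g) (a b : ℝ) (ha : 0 ≤ a)
    (hanti : AntitoneOn g (Icc a b)) (hgnn : ∀ x ∈ Icc a b, 0 ≤ g x)
    (n : ℕ) (c : ℝ) (hc : 0 ≤ c) :
    AntitoneOn (fun v => g v ^ n * (v + (c + ∫ x in v..b, g x ^ n) / g v ^ n)) (Icc a b)
    ∧ ∀ v ∈ Icc a b, 0 ≤ g v ^ n * (v + (c + ∫ x in v..b, g x ^ n) / g v ^ n) := by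
  have hint : ∀ p q : ℝ, IntervalIntegrable (fun x => g x ^ n) volume p q :=
    fun p q => (hgcont.pow n).intervalIntegrable p q
  have hnonneg : ∀ v ∈ Icc a b, 0 ≤ g v ^ n * (v + (c + ∫ x in v..b, g x ^ n) / g v ^ n) := by
    intro v hv
    by_cases hz : g v ^ n = 0
    · rw [hz, zero_mul]
    · rw [mul_add, mul_div_cancel₀ _ hz]
      have hI : 0 ≤ ∫ x in v..b, g x ^ n := by
        apply intervalIntegral.integral_nonneg hv.2
        intro x hx
        exact pow_nonneg (hgnn x ⟨le_trans hv.1 hx.1, hx.2⟩) n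
      have hv0 : 0 ≤ v := le_trans ha hv.1
      have := pow_nonneg (hgnn v hv) n
      positivity
  refine ⟨?_, hnonneg⟩
  intro v hv w hw hvw
  by_cases hzw : g w ^ n = 0
  · simp only [hzw, zero_mul]
    exact hnonneg v hv
  · have hgw : 0 < g w ^ n := lt_of_le_of_ne (pow_nonneg (hgnn w hw) n) (Ne.symm hzw)
    have hgvw : g w ^ n ≤ g v ^ n := pow_le_pow_left₀ (hgnn w hw) (hanti hv hw hvw) n
    have hgv0 : g v ^ n ≠ 0 := ne_of_gt (lt_of_lt_of_le hgw hgvw)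
    simp only [mul_add, mul_div_cancel₀ _ hzw, mul_div_cancel₀ _ hgv0]
    have hsplit : (∫ x in v..w, g x ^ n) + (∫ x in w..b, g x ^ n) = ∫ x in v..b, g x ^ n :=
      intervalIntegral.integral_add_adjacent_intervals (hint v w) (hint w b)
    have hbound : g w ^ n * (w - v) ≤ ∫ x in v..w, g x ^ n := by
      have : (∫ x in v..w, (g w ^ n : ℝ)) ≤ ∫ x in v..w, g x ^ n := by
        apply intervalIntegral.integral_mono_on hvw intervalIntegrable_const (hint v w)
        intro x hx
        exact pow_le_pow_left₀ (hgnn w hw)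
          (hanti ⟨le_trans hv.1 hx.1, le_trans hx.2 hw.2⟩ hw hx.2) n
      simpa [mul_comm] using this
    have hv0 : 0 ≤ v := le_trans ha hv.1
    have hvv : v * (g w ^ n) ≤ v * (g v ^ n) := mul_le_mul_of_nonneg_left hgvw hv0
    nlinarith [hsplit, hbound, hvv]

/-- Key monotonicity step (Fact 4): along the payoff-equivalence bid function `β`,
both `(1 − G(v))^(m−1) β(v)` and `(1 − G(v))^m β(v)` are nonincreasing. -/
theorem bid_revenue_antitone
    (F : ℝ → ℝ)
    (hFcont : Continuous F) (hFmono : Monotone F)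
    (hF0 : F 0 = 0) (hFpos : ∀ v ∈ Ioc (0 : ℝ) 1, 0 < F v) (hF1 : F 1 = 1)
    (r : ℝ) (hr : r ∈ Ioc (0 : ℝ) 1)
    (vs : ℝ) (hvs : vs ∈ Ico (0 : ℝ) r) (hFvs : F vs < 1)
    (m : ℕ) (hm : 1 ≤ m)
    (vhat : ℝ) (hvhat : vhat ∈ Ioo vs 1)
    (c : ℝ) (hc : 0 ≤ c) :
    AntitoneOn
      (fun v => (1 - G F vs v) ^ (m - 1) *
        (v + (c + ∫ x in v..vhat, (1 - G F vs x) ^ (m - 1)) /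
          (1 - G F vs v) ^ (m - 1)))
      (Icc vs vhat) ∧
    AntitoneOn
      (fun v => (1 - G F vs v) ^ m *
        (v + (c + ∫ x in v..vhat, (1 - G F vs x) ^ (m - 1)) /
          (1 - G F vs v) ^ (m - 1)))
      (Icc vs vhat) := by
  have hK : (0:ℝ) < 1 - F vs := by linarith
  have hgcont : Continuous (fun x => 1 - G F vs x) := by
    unfold G
    exact continuous_const.sub ((hFcont.sub continuous_const).div_const _)
  have hanti : AntitoneOn (fun x => 1 - G F vs x) (Icc vs vhat) := by
    intro x hx y hy hxy
    unfold G
    have := hFmono hxy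
    have h1 : (F x - F vs) / (1 - F vs) ≤ (F y - F vs) / (1 - F vs) := by
      rw [div_le_div_iff₀ hK hK]
      nlinarith
    linarith
  have hgnn : ∀ x ∈ Icc vs vhat, 0 ≤ 1 - G F vs x := by
    intro x hx
    have hx1 : F x ≤ 1 := hF1 ▸ hFmono (le_trans hx.2 (le_of_lt hvhat.2))
    unfold G
    have : (F x - F vs) / (1 - F vs) ≤ 1 := (div_le_one hK).mpr (by linarith)
    linarith
  obtain ⟨h1, h2⟩ := aux_fact4 (fun x => 1 - G F vs x) hgcont vs vhat hvs.1
    hanti hgnn (m - 1) c hc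
  refine ⟨h1, ?_⟩
  have hrw : (fun v => (1 - G F vs v) ^ m *
        (v + (c + ∫ x in v..vhat, (1 - G F vs x) ^ (m - 1)) /
          (1 - G F vs v) ^ (m - 1)))
      = fun v => (1 - G F vs v) *
        ((1 - G F vs v) ^ (m - 1) *
          (v + (c + ∫ x in v..vhat, (1 - G F vs x) ^ (m - 1)) /
            (1 - G F vs v) ^ (m - 1))) := by
    funext v
    have hpow : (1 - G F vs v) ^ m = (1 - G F vs v) ^ (m - 1) * (1 - G F vs v) := by
      rw [← pow_succ, Nat.sub_add_cancel hm]
    rw [hpow]; ring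
  rw [hrw]
  intro v hv w hw hvw
  exact mul_le_mul (hanti hv hw hvw) (h1 hv hw hvw) (h2 w hw) (hgnn v hv)
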